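/- The three points (ν, 1-ν-ν²), (ν²-2, ν-1), (2-ν-ν², ν²-3), where ν = 2cos(2π/9), are singular points of the affine curve f₁(x,y) = 0; i.e., f₁ and both partial derivatives ∂f₁/∂x, ∂f₁/∂y vanish at each of these points. -/
import Mathlib


open MvPolynomial Real

/-- The Kenyon–Smillie quartic `G` in `ℝ[X,Y,Z]`. -/
noncomputable def G : MvPolynomial (Fin 3) ℝ :=
  X 0 ^ 4 - 3 * X 0 ^ 3 * X 1 + 6 * X 0 ^ 3 * X 2 - 3 * X 0 ^ 2 * X 1 ^ 2
    - 6 * X 0 ^ 2 * X 1 * X 2 + 6 * X 0 ^ 2 * X 2 ^ 2 + 4 * X 0 * X 1 ^ 3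
    - 6 * X 0 * X 1 ^ 2 * X 2 - 6 * X 0 * X 1 * X 2 ^ 2 + X 0 * X 2 ^ 3
    + 3 * X 1 ^ 4 + 3 * X 1 ^ 3 * X 2

/-- `f₁(x,y) = F(x,y,1,1) = x^4 + G(x,y,1)`, the dehomogenized fiber over `t = 1`. -/
noncomputable def f₁ : MvPolynomial (Fin 2) ℝ :=
  aeval ![X 0, X 1, 1] (X 0 ^ 4 + G)

/-- `(x, y)` is a singular point of the affine curve `f₁ = 0`. -/
def IsSingularPoint (x y : ℝ) : Prop :=
  eval ![x, y] f₁ = 0 ∧ eval ![x, y] (pderiv 0 f₁) = 0 ∧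
    eval ![x, y] (pderiv 1 f₁) = 0

lemma eval_f₁ (x y : ℝ) : eval ![x, y] f₁ =
    2*x^4 + 6*x^3 - 3*x^3*y + 6*x^2 - 6*x^2*y - 3*x^2*y^2 + x - 6*x*y - 6*x*y^2
      + 4*x*y^3 + 3*y^3 + 3*y^4 := by
  have h6 : (6 : MvPolynomial (Fin 3) ℝ) = C 6 := (map_ofNat C 6).symm
  have h3 : (3 : MvPolynomial (Fin 3) ℝ) = C 3 := (map_ofNat C 3).symm
  have h4 : (4 : MvPolynomial (Fin 3) ℝ) = C 4 := (map_ofNat C 4).symm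
  simp [f₁, G, h6, h3, h4]; ring

lemma eval_pd0_f₁ (x y : ℝ) : eval ![x, y] (pderiv 0 f₁) =
    1 + 12*x - 12*x*y - 6*x*y^2 + 18*x^2 - 9*x^2*y + 8*x^3 - 6*y - 6*y^2 + 4*y^3 := by
  have h6 : (6 : MvPolynomial (Fin 3) ℝ) = C 6 := (map_ofNat C 6).symm
  have h3 : (3 : MvPolynomial (Fin 3) ℝ) = C 3 := (map_ofNat C 3).symm
  have h4 : (4 : MvPolynomial (Fin 3) ℝ) = C 4 := (map_ofNat C 4).symm
  simp [f₁, G, h6, h3, h4, pderiv_X, pderiv_C]; ring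

lemma eval_pd1_f₁ (x y : ℝ) : eval ![x, y] (pderiv 1 f₁) =
    -6*x - 12*x*y + 12*x*y^2 - 6*x^2 - 6*x^2*y - 3*x^3 + 9*y^2 + 12*y^3 := by
  have h6 : (6 : MvPolynomial (Fin 3) ℝ) = C 6 := (map_ofNat C 6).symm
  have h3 : (3 : MvPolynomial (Fin 3) ℝ) = C 3 := (map_ofNat C 3).symm
  have h4 : (4 : MvPolynomial (Fin 3) ℝ) = C 4 := (map_ofNat C 4).symm
  simp [f₁, G, h6, h3, h4, pderiv_X, pderiv_C]; ring

theorem nodes_of_fiber_one :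
    letI ν : ℝ := 2 * Real.cos (2 * π / 9)
    IsSingularPoint ν (1 - ν - ν ^ 2) ∧
    IsSingularPoint (ν ^ 2 - 2) (ν - 1) ∧
    IsSingularPoint (2 - ν - ν ^ 2) (ν ^ 2 - 3) := by
  set ν : ℝ := 2 * Real.cos (2 * π / 9) with hd
  have hc : Real.cos (2 * π / 3) = -(1/2) := by
    rw [show (2 * π / 3 : ℝ) = π - π / 3 by ring, Real.cos_pi_sub, Real.cos_pi_div_three]
  have h3m := Real.cos_three_mul (2 * π / 9)
  rw [show (3 * (2 * π / 9) : ℝ) = 2 * π / 3 by ring, hc] at h3m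
  have hν : ν ^ 3 - 3 * ν + 1 = 0 := by
    rw [hd]
    nlinarith [h3m]
  refine ⟨⟨?_, ?_, ?_⟩, ⟨?_, ?_, ?_⟩, ⟨?_, ?_, ?_⟩⟩
  · rw [eval_f₁]
    linear_combination (6 - 10*ν - 21*ν^2 - 3*ν^3 + 8*ν^4 + 3*ν^5) * hν
  · rw [eval_pd0_f₁]
    linear_combination (-7 - 21*ν - 18*ν^2 - 4*ν^3) * hν
  · rw [eval_pd1_f₁]
    linear_combination (21 + 3*ν - 24*ν^2 - 12*ν^3) * hν
  · rw [eval_f₁]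
    linear_combination (2 - 9*ν + 11*ν^2 - 4*ν^3 - 3*ν^4 + 2*ν^5) * hν
  · rw [eval_pd0_f₁]
    linear_combination (5 - 3*ν - 9*ν^2 + 8*ν^3) * hν
  · rw [eval_pd1_f₁]
    linear_combination (-15 + 21*ν - 6*ν^2 - 3*ν^3) * hν
  · rw [eval_f₁]
    linear_combination (16 - 41*ν - 20*ν^2 + 13*ν^3 + 7*ν^4 + ν^5) * hν
  · rw [eval_pd0_f₁]
    linear_combination (89 - 3*ν - 36*ν^2 - 7*ν^3) * hν
  · rw [eval_pd1_f₁]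
    linear_combination (57 + 21*ν - 15*ν^2 - 3*ν^3) * hν
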